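/- arXiv:1307.0227 — 2 statements merged into one kernel-verified Lean document; each statement's English description precedes it below -/
import Mathlib

section
/- Let K be a compact topological space and let g_m : K → ℝ (m ≥ 1) be continuous functions with g_m ≥ 0 satisfying the pointwise subadditivity g_{m+n}(x) ≤ g_m(x) + g_n(x) for all m, n ≥ 1 and all x ∈ K. Let h(x) := inf_{m ≥ 1} g_m(x)/m, so that g_m(x)/m → h(x) pointwise by Fekete's lemma. Then the sequence (g_m/m) converges uniformly to h on K if and only if h is continuous on K. -/
/-!
Subadditivity gives `g (m * q) ≤ q * g m`, so along the factorials the quotients `g k ! / k !`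
decrease in `k`, and their pointwise limit is still `h` because every `m` divides `k !` for
`k ≥ m`. If `h` is continuous, Dini's theorem makes this subsequence converge uniformly. For a
general index `n`, peeling copies of `m` off `n` gives `g n ≤ (n / m) * g m + B` with `B` a
bound of `g 1, …, g m`, which is uniform on the compact space; this transfers uniform
convergence from `k !` to all `n`. The converse is continuity of a uniform limit.
-/

open Filter Topology Nat

/-- Unlike Mathlib's `Subadditive`, this leaves `u 0` unconstrained. -/
def PosSubadditive (u : ℕ → ℝ) : Prop :=
  ∀ m n, 1 ≤ m → 1 ≤ n → u (m + n) ≤ u m + u n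

theorem ciInf_div_le_div {u : ℕ → ℝ} (hnonneg : ∀ m, 1 ≤ m → 0 ≤ u m) {n : ℕ} (hn : 1 ≤ n) :
    ⨅ m : ℕ, u (m + 1) / ((m : ℝ) + 1) ≤ u n / n := by
  have hbdd : BddBelow (Set.range fun m : ℕ => u (m + 1) / ((m : ℝ) + 1)) :=
    ⟨0, by rintro _ ⟨m, rfl⟩; exact div_nonneg (hnonneg _ (by omega)) (by positivity)⟩
  obtain ⟨k, rfl⟩ := Nat.exists_eq_add_of_le' hn
  exact_mod_cast ciInf_le hbdd k

namespace PosSubadditive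

variable {u : ℕ → ℝ}

theorem le_mul (hu : PosSubadditive u) {m : ℕ} (hm : 1 ≤ m) {q : ℕ} (hq : 1 ≤ q) :
    u (m * q) ≤ q * u m := by
  induction q, hq using Nat.le_induction with
  | base => simp
  | succ q hq ih =>
    calc u (m * (q + 1)) = u (m * q + m) := by rw [Nat.mul_succ]
      _ ≤ u (m * q) + u m := hu _ _ (Nat.one_le_iff_ne_zero.2 (by positivity)) hm
      _ ≤ q * u m + u m := by gcongr
      _ = ↑(q + 1) * u m := by push_cast; ring

theorem div_le_div_of_dvd (hu : PosSubadditive u) {m n : ℕ} (hm : 1 ≤ m) (hn : 1 ≤ n)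
    (hmn : m ∣ n) : u n / n ≤ u m / m := by
  obtain ⟨q, rfl⟩ := hmn
  have hq : 1 ≤ q := Nat.pos_of_mul_pos_left hn
  have hm' : (0 : ℝ) < m := by exact_mod_cast hm
  calc u (m * q) / ↑(m * q) ≤ q * u m / ↑(m * q) := by gcongr; exact hu.le_mul hm hq
    _ = u m / m := by push_cast; field_simp

theorem le_div_mul_add (hu : PosSubadditive u) {m : ℕ} (hm : 1 ≤ m) (hum : 0 ≤ u m) {B : ℝ}
    (hB : ∀ r, 1 ≤ r → r ≤ m → u r ≤ B) {n : ℕ} (hn : 1 ≤ n) :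
    u n ≤ n / m * u m + B := by
  induction n using Nat.strong_induction_on with
  | _ n ih =>
  rcases le_or_gt n m with hnm | hmn
  · have : 0 ≤ (n : ℝ) / m * u m := by positivity
    linarith [hB n hn hnm]
  · have hm' : (m : ℝ) ≠ 0 := by positivity
    calc u n = u ((n - m) + m) := by rw [Nat.sub_add_cancel hmn.le]
      _ ≤ u (n - m) + u m := hu _ _ (by omega) hm
      _ ≤ ↑(n - m) / m * u m + B + u m := by gcongr; exact ih _ (by omega) (by omega)
      _ = n / m * u m + B := by rw [Nat.cast_sub hmn.le]; field_simp; ring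

theorem div_factorial_antitone (hu : PosSubadditive u) : Antitone fun k => u k ! / k ! :=
  antitone_nat_of_succ_le fun k =>
    hu.div_le_div_of_dvd k.factorial_pos (k + 1).factorial_pos
      (Nat.factorial_dvd_factorial k.le_succ)

theorem tendsto_div_factorial (hu : PosSubadditive u) (hnonneg : ∀ m, 1 ≤ m → 0 ≤ u m) :
    Tendsto (fun k => u k ! / k !) atTop (𝓝 (⨅ m : ℕ, u (m + 1) / ((m : ℝ) + 1))) := by
  have hbdd : BddBelow (Set.range fun k => u k ! / k !) :=
    ⟨0, by rintro _ ⟨k, rfl⟩; exact div_nonneg (hnonneg _ k.factorial_pos) (by positivity)⟩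
  convert tendsto_atTop_ciInf hu.div_factorial_antitone hbdd using 2
  refine le_antisymm (le_ciInf fun k => ciInf_div_le_div hnonneg k.factorial_pos)
    (le_ciInf fun m => ?_)

  calc ⨅ k, u k ! / k ! ≤ u (m + 1)! / (m + 1)! := ciInf_le hbdd _
    _ ≤ u (m + 1) / ↑(m + 1) :=
      hu.div_le_div_of_dvd (by omega) (m + 1).factorial_pos (Nat.dvd_factorial (by omega) le_rfl)
    _ = u (m + 1) / ((m : ℝ) + 1) := by push_cast; rfl

end PosSubadditive

section CompactSpace

variable {K : Type*} [TopologicalSpace K] [CompactSpace K] {g : ℕ → K → ℝ}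

theorem exists_forall_le_of_continuous (hcont : ∀ m, 1 ≤ m → Continuous (g m)) (m : ℕ) :
    ∃ B, ∀ r, 1 ≤ r → r ≤ m → ∀ x, g r x ≤ B := by
  obtain ⟨B, hB⟩ : BddAbove (⋃ r ∈ Set.Icc 1 m, Set.range (g r)) :=
    (Set.finite_Icc 1 m).bddAbove_biUnion.2 fun r hr => (isCompact_range (hcont r hr.1)).bddAbove
  exact ⟨B, fun r h1 h2 x => hB (Set.mem_biUnion ⟨h1, h2⟩ ⟨x, rfl⟩)⟩

theorem eventually_forall_div_lt_div_add (hcont : ∀ m, 1 ≤ m → Continuous (g m))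
    (hnonneg : ∀ m, 1 ≤ m → ∀ x, 0 ≤ g m x) (hsub : ∀ x, PosSubadditive (g · x))
    {m : ℕ} (hm : 1 ≤ m) {ε : ℝ} (hε : 0 < ε) :
    ∀ᶠ n : ℕ in atTop, ∀ x, g n x / n < g m x / m + ε := by
  obtain ⟨B, hB⟩ := exists_forall_le_of_continuous hcont m
  filter_upwards [(tendsto_const_div_atTop_nhds_zero_nat B).eventually (gt_mem_nhds hε),
    eventually_ge_atTop 1] with n hBn hn x
  have hn' : (0 : ℝ) < n := by exact_mod_cast hn
  calc g n x / n ≤ (n / m * g m x + B) / n := by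
        gcongr; exact (hsub x).le_div_mul_add hm (hnonneg m hm x) (fun r h1 h2 => hB r h1 h2 x) hn
    _ = g m x / m + B / n := by field_simp
    _ < g m x / m + ε := by gcongr

theorem tendstoUniformly_div_of_tendstoUniformly_div_factorial
    (hcont : ∀ m, 1 ≤ m → Continuous (g m)) (hnonneg : ∀ m, 1 ≤ m → ∀ x, 0 ≤ g m x)
    (hsub : ∀ x, PosSubadditive (g · x)) {h : K → ℝ} (hle : ∀ n, 1 ≤ n → ∀ x, h x ≤ g n x / n)
    (hfac : TendstoUniformly (fun k x => g k ! x / k !) h atTop) :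
    TendstoUniformly (fun n x => g n x / n) h atTop := by
  rw [Metric.tendstoUniformly_iff] at hfac ⊢
  intro ε hε
  obtain ⟨k, hk⟩ := (hfac (ε / 2) (half_pos hε)).exists
  filter_upwards [eventually_forall_div_lt_div_add hcont hnonneg hsub k.factorial_pos
    (half_pos hε), eventually_ge_atTop 1] with n hn hn1 x
  have hkx := (abs_lt.1 (Real.dist_eq _ _ ▸ hk x)).1
  rw [Real.dist_eq, abs_sub_lt_iff]
  constructor <;> linarith [hle n hn1 x, hn x]

end CompactSpace

/-- On a compact space `K`, given continuous nonnegative functions `g m` (for `m ≥ 1`)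
which are pointwise subadditive in `m`, the sequence `g m / m` converges uniformly to its
pointwise limit `h x = ⨅ m ≥ 1, g m x / m` if and only if `h` is continuous. -/
theorem uniform_convergence_iff_continuous_of_subadditive
    {K : Type*} [TopologicalSpace K] [CompactSpace K]
    (g : ℕ → K → ℝ)
    (hcont : ∀ m, 1 ≤ m → Continuous (g m))
    (hnonneg : ∀ m, 1 ≤ m → ∀ x, 0 ≤ g m x)
    (hsub : ∀ m n, 1 ≤ m → 1 ≤ n → ∀ x, g (m + n) x ≤ g m x + g n x)
    (h : K → ℝ)
    (hh : ∀ x, h x = ⨅ m : ℕ, g (m + 1) x / ((m : ℝ) + 1)) :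
    TendstoUniformly (fun m (x : K) => g m x / (m : ℝ)) h Filter.atTop ↔ Continuous h := by
  have hsub' : ∀ x, PosSubadditive (g · x) := fun x m n hm hn => hsub m n hm hn x
  have hle : ∀ n, 1 ≤ n → ∀ x, h x ≤ g n x / n := fun n hn x =>
    hh x ▸ ciInf_div_le_div (fun m hm => hnonneg m hm x) hn
  refine ⟨fun hunif => hunif.continuous ?_, fun hc => ?_⟩
  · exact ((eventually_ge_atTop 1).mono fun m hm => (hcont m hm).div_const _).frequently
  have hdini : TendstoUniformly (fun k x => g k ! x / k !) h atTop :=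
    Antitone.tendstoUniformly_of_forall_tendsto (fun k => (hcont _ k.factorial_pos).div_const _)
      (fun _ _ hkl x => (hsub' x).div_factorial_antitone hkl) hc
      (fun x => hh x ▸ (hsub' x).tendsto_div_factorial fun m hm => hnonneg m hm x)
  exact tendstoUniformly_div_of_tendstoUniformly_div_factorial hcont hnonneg hsub' hle hdini
end

section
/- Let E be a finite-dimensional real normed vector space, let s ⊆ E be a finite set, and let P = convexHull(s) be the polytope it spans. If f : E → ℝ is concave on P, then f is automatically lower semicontinuous on P. Consequently, a function that is concave on P and upper semicontinuous on P is continuous on P. -/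
/-!
Near a point `x` of the polytope `P = conv S`, every `y ∈ P` is `(1 - T) • x + T • p` with `p ∈ P`
and `T ≤ C * ‖y - x‖`. Indeed `y - x` is a nonnegative combination of the vectors `v - x`,
`v ∈ S`, of total weight `1`; by the conic Carathéodory argument it is also one over a linearly
independent subfamily, of total weight `T ≤ 1`, and on each of the finitely many independent
subfamilies the coefficients are bounded by a multiple of the norm of the combination.
Concavity then gives `f y ≥ f x - T * (f x - inf_P f) ≥ f x - K * ‖y - x‖`, which is lower
semicontinuity at `x`. This is where finiteness of `S` matters: for a general compact convex set
the weight `T` cannot be controlled by `‖y - x‖`.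
-/

open Finset Filter Topology

lemma Finset.exists_mul_le_and_exists_mul_eq {ι : Type*} {t : Finset ι} {g w : ι → ℝ}
    (hw : ∀ i ∈ t, 0 ≤ w i) (hpos : ∃ i ∈ t, 0 < g i) :
    ∃ θ : ℝ, 0 ≤ θ ∧ (∀ i ∈ t, θ * g i ≤ w i) ∧ ∃ j ∈ t, θ * g j = w j := by
  classical
  have hne : (t.filter fun i => 0 < g i).Nonempty := by simpa [Finset.Nonempty] using hpos
  obtain ⟨j, hj, hjmin⟩ := (t.filter fun i => 0 < g i).exists_min_image (fun i => w i / g i) hne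
  rw [mem_filter] at hj
  refine ⟨w j / g j, div_nonneg (hw j hj.1) hj.2.le, fun i hi => ?_, j, hj.1,
    div_mul_cancel₀ _ hj.2.ne'⟩
  rcases le_or_gt (g i) 0 with hgi | hgi
  · exact (mul_nonpos_of_nonneg_of_nonpos (div_nonneg (hw j hj.1) hj.2.le) hgi).trans (hw i hi)
  · exact (le_div_iff₀ hgi).1 (hjmin i (mem_filter.2 ⟨hi, hgi⟩))

section ConicCaratheodory

variable {ι E : Type*} [AddCommGroup E] [Module ℝ E] {u : ι → E}

lemma exists_relation_sum_nonneg_of_not_linearIndepOn {t : Finset ι} (h : ¬LinearIndepOn ℝ u t) :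
    ∃ g : ι → ℝ, ∑ i ∈ t, g i • u i = 0 ∧ 0 ≤ ∑ i ∈ t, g i ∧ ∃ i ∈ t, 0 < g i := by
  obtain ⟨g, hrel, i, hi, hgi⟩ := not_linearIndepOn_finset_iff.1 h
  have key : ∀ g : ι → ℝ, 0 ≤ ∑ i ∈ t, g i → g i ≠ 0 → ∃ j ∈ t, 0 < g j := by
    intro g hsum hgi
    by_contra! hneg
    exact hgi ((sum_eq_zero_iff_of_nonpos hneg).1 (le_antisymm (sum_nonpos hneg) hsum) i hi)
  rcases le_or_gt 0 (∑ i ∈ t, g i) with hsum | hsum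
  · exact ⟨g, hrel, hsum, key g hsum hgi⟩
  · have hsum' : 0 ≤ ∑ i ∈ t, -g i := by rw [sum_neg_distrib]; linarith
    refine ⟨-g, ?_, hsum', key (-g) hsum' (neg_ne_zero.2 hgi)⟩
    simp only [Pi.neg_apply, neg_smul, sum_neg_distrib, hrel, neg_zero]

variable (u) in
theorem exists_linearIndepOn_sum_smul_eq (t : Finset ι) (w : ι → ℝ) (hw : ∀ i ∈ t, 0 ≤ w i) :
    ∃ t' ⊆ t, ∃ w' : ι → ℝ, (∀ i ∈ t', 0 ≤ w' i) ∧ LinearIndepOn ℝ u t' ∧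
      ∑ i ∈ t', w' i • u i = ∑ i ∈ t, w i • u i ∧ ∑ i ∈ t', w' i ≤ ∑ i ∈ t, w i := by
  classical
  induction t using Finset.strongInduction generalizing w with
  | H t ih =>
  by_cases hind : LinearIndepOn ℝ u t
  · exact ⟨t, subset_rfl, w, hw, hind, rfl, le_rfl⟩
  obtain ⟨g, hrel, hgsum, hpos⟩ := exists_relation_sum_nonneg_of_not_linearIndepOn hind
  obtain ⟨θ, hθ, hθle, j, hj, hθj⟩ := t.exists_mul_le_and_exists_mul_eq hw hpos
  -- Moving the weights along the relation `g` until one vanishes removes the generator `j`.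
  set w₁ : ι → ℝ := fun i => w i - θ * g i
  have hw₁j : w₁ j = 0 := sub_eq_zero.2 hθj.symm
  have hvec : ∑ i ∈ t, w₁ i • u i = ∑ i ∈ t, w i • u i := by
    simp only [w₁, sub_smul, sum_sub_distrib, mul_smul, ← smul_sum, hrel, smul_zero, sub_zero]
  have hmass : ∑ i ∈ t, w₁ i ≤ ∑ i ∈ t, w i := by
    simp only [w₁, sum_sub_distrib, ← mul_sum]
    linarith [mul_nonneg hθ hgsum]
  obtain ⟨t', ht', w', hw', hind', hvec', hmass'⟩ :=
    ih (t.erase j) (erase_ssubset hj) w₁ fun i hi => sub_nonneg.2 (hθle i (mem_of_mem_erase hi))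
  refine ⟨t', ht'.trans (erase_subset j t), w', hw', hind', ?_, ?_⟩
  · rw [hvec', sum_erase _ (by rw [hw₁j, zero_smul]), hvec]
  · rw [sum_erase _ hw₁j] at hmass'
    exact hmass'.trans hmass

end ConicCaratheodory

section CoefficientBound

variable {ι E : Type*} [NormedAddCommGroup E] [NormedSpace ℝ E] {u : ι → E}

lemma LinearIndepOn.eventually_sum_abs_le_mul_norm {t : Finset ι} (h : LinearIndepOn ℝ u t) :
    ∀ᶠ C in atTop, ∀ w : ι → ℝ, ∑ i ∈ t, |w i| ≤ C * ‖∑ i ∈ t, w i • u i‖ := by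
  set L := Fintype.linearCombination ℝ fun i : t => u i
  obtain ⟨K, -, hK⟩ := L.exists_antilipschitzWith
    (LinearMap.ker_eq_bot.2 h.linearIndependent.fintypeLinearCombination_injective)
  filter_upwards [eventually_ge_atTop (t.card * K : ℝ)] with C hC w
  set c : t → ℝ := fun i => w i
  have hLc : L c = ∑ i ∈ t, w i • u i := by
    simp only [L, c, Fintype.linearCombination_apply, sum_coe_sort t fun i => w i • u i]
  calc ∑ i ∈ t, |w i| = ∑ i : t, ‖c i‖ := (sum_coe_sort t fun i => |w i|).symm
    _ ≤ ∑ _i : t, ‖c‖ := sum_le_sum fun i _ => norm_le_pi_norm c i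
    _ = t.card * ‖c‖ := by simp
    _ ≤ t.card * (K * ‖L c‖) := by gcongr; exact ZeroHomClass.bound_of_antilipschitz L hK c
    _ ≤ C * ‖∑ i ∈ t, w i • u i‖ := by rw [← mul_assoc, hLc]; gcongr

variable (u) in
theorem exists_sum_smul_eq_sum_le_mul_norm (S : Finset ι) :
    ∃ C : ℝ, ∀ w : ι → ℝ, (∀ i ∈ S, 0 ≤ w i) →
      ∃ t ⊆ S, ∃ w' : ι → ℝ, (∀ i ∈ t, 0 ≤ w' i) ∧ ∑ i ∈ t, w' i • u i = ∑ i ∈ S, w i • u i ∧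
        ∑ i ∈ t, w' i ≤ ∑ i ∈ S, w i ∧ ∑ i ∈ t, w' i ≤ C * ‖∑ i ∈ S, w i • u i‖ := by
  have hbound : ∀ᶠ C in atTop, ∀ t ∈ S.powerset, LinearIndepOn ℝ u t →
      ∀ w : ι → ℝ, ∑ i ∈ t, |w i| ≤ C * ‖∑ i ∈ t, w i • u i‖ := by
    refine (eventually_all_finset _).2 fun t _ => ?_
    by_cases h : LinearIndepOn ℝ u t
    · exact h.eventually_sum_abs_le_mul_norm.mono fun C hC _ => hC
    · exact Eventually.of_forall fun C h' => absurd h' h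
  obtain ⟨C, hC⟩ := hbound.exists
  refine ⟨C, fun w hw => ?_⟩
  obtain ⟨t, htS, w', hw', hind, hvec, hmass⟩ := exists_linearIndepOn_sum_smul_eq u S w hw
  refine ⟨t, htS, w', hw', hvec, hmass, ?_⟩
  calc ∑ i ∈ t, w' i ≤ ∑ i ∈ t, |w' i| := sum_le_sum fun i _ => le_abs_self _
    _ ≤ C * ‖∑ i ∈ S, w i • u i‖ := hvec ▸ hC t (mem_powerset.2 htS) hind w'

end CoefficientBound

section Polytope

variable {E : Type*} [NormedAddCommGroup E] [NormedSpace ℝ E] {S : Finset E} {x : E}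

theorem Finset.exists_segment_param_le_mul_norm (hx : x ∈ convexHull ℝ (S : Set E)) :
    ∃ C : ℝ, ∀ y ∈ convexHull ℝ (S : Set E), ∃ T : ℝ, 0 ≤ T ∧ T ≤ 1 ∧ T ≤ C * ‖y - x‖ ∧
      ∃ p ∈ convexHull ℝ (S : Set E), (1 - T) • x + T • p = y := by
  obtain ⟨C, hC⟩ := exists_sum_smul_eq_sum_le_mul_norm (fun v => v - x) S
  refine ⟨C, fun y hy => ?_⟩
  obtain ⟨w, hw0, hw1, hwy⟩ := Finset.mem_convexHull'.1 hy
  have hyx : ∑ v ∈ S, w v • (v - x) = y - x := by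
    simp only [smul_sub, sum_sub_distrib, ← sum_smul, hw1, hwy, one_smul]
  obtain ⟨t, htS, w', hw', hvec, hmass, hbound⟩ := hC w hw0
  rw [hyx] at hvec hbound
  rw [hw1] at hmass
  refine ⟨∑ v ∈ t, w' v, sum_nonneg hw', hmass, hbound, ?_⟩
  have hcombo : ∀ p : E, (∑ v ∈ t, w' v) • p = ∑ v ∈ t, w' v • v →
      (1 - ∑ v ∈ t, w' v) • x + (∑ v ∈ t, w' v) • p = y := by
    intro p hp
    rw [← sub_add_cancel y x, ← hvec]
    simp only [smul_sub, sum_sub_distrib, ← sum_smul, ← hp]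
    module
  rcases (sum_nonneg hw').eq_or_lt with hT | hT
  · have hw'0 := (sum_eq_zero_iff_of_nonneg hw').1 hT.symm
    refine ⟨x, hx, hcombo x ?_⟩
    rw [← hT, zero_smul, sum_eq_zero fun v hv => by rw [hw'0 v hv, zero_smul]]
  · refine ⟨t.centerMass w' id, convexHull_mono htS (t.centerMass_id_mem_convexHull hw' hT),
      hcombo _ ?_⟩
    rw [Finset.centerMass, smul_inv_smul₀ hT.ne']
    rfl

theorem ConcaveOn.exists_sub_mul_norm_le_of_mem_convexHull {f : E → ℝ}
    (hf : ConcaveOn ℝ (convexHull ℝ (S : Set E)) f) (hx : x ∈ convexHull ℝ (S : Set E)) :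
    ∃ K : ℝ, ∀ y ∈ convexHull ℝ (S : Set E), f x - K * ‖y - x‖ ≤ f y := by
  obtain ⟨m, hm⟩ :=
    hf.bddBelow_convexHull (subset_convexHull ℝ _) (S.finite_toSet.image f).bddBelow
  have hm' : ∀ z ∈ convexHull ℝ (S : Set E), m ≤ f z := fun z hz => hm ⟨z, hz, rfl⟩
  obtain ⟨C, hC⟩ := Finset.exists_segment_param_le_mul_norm hx
  refine ⟨C * (f x - m), fun y hy => ?_⟩
  obtain ⟨T, hT0, hT1, hTC, p, hp, rfl⟩ := hC y hy
  have hconc := hf.2 hx hp (sub_nonneg.2 hT1) hT0 (sub_add_cancel 1 T)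
  simp only [smul_eq_mul] at hconc
  have hfx : 0 ≤ f x - m := sub_nonneg.2 (hm' x hx)
  calc f x - C * (f x - m) * ‖(1 - T) • x + T • p - x‖ ≤ f x - T * (f x - m) := by
        nlinarith [mul_le_mul_of_nonneg_right hTC hfx]
    _ ≤ (1 - T) * f x + T * f p := by nlinarith [mul_le_mul_of_nonneg_left (hm' p hp) hT0]
    _ ≤ f ((1 - T) • x + T • p) := hconc

end Polytope

theorem lowerSemicontinuousOn_of_forall_exists_sub_mul_norm_le {α : Type*}
    [SeminormedAddCommGroup α] {s : Set α} {f : α → ℝ}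
    (h : ∀ x ∈ s, ∃ K : ℝ, ∀ y ∈ s, f x - K * ‖y - x‖ ≤ f y) : LowerSemicontinuousOn f s := by
  intro x hx c hc
  obtain ⟨K, hK⟩ := h x hx
  have hlim : Tendsto (fun y => f x - K * ‖y - x‖) (𝓝[s] x) (𝓝 (f x)) := by
    have hcont : Continuous fun y => f x - K * ‖y - x‖ := by fun_prop
    simpa using (hcont.tendsto x).mono_left nhdsWithin_le_nhds
  filter_upwards [hlim.eventually_const_lt hc, self_mem_nhdsWithin] with y hy hys
  exact hy.trans_le (hK y hys)

theorem concaveOn_polytope_lowerSemicontinuousOn_general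
    {E : Type*} [NormedAddCommGroup E] [NormedSpace ℝ E]
    (s : Set E) (hs : s.Finite) (f : E → ℝ)
    (hf : ConcaveOn ℝ (convexHull ℝ s) f) :
    LowerSemicontinuousOn f (convexHull ℝ s) ∧
    (UpperSemicontinuousOn f (convexHull ℝ s) → ContinuousOn f (convexHull ℝ s)) := by
  lift s to Finset E using hs
  have hlsc : LowerSemicontinuousOn f (convexHull ℝ (s : Set E)) :=
    lowerSemicontinuousOn_of_forall_exists_sub_mul_norm_le fun _ hx =>
      hf.exists_sub_mul_norm_le_of_mem_convexHull hx
  exact ⟨hlsc, fun husc => continuousOn_iff_lower_upperSemicontinuousOn.2 ⟨hlsc, husc⟩⟩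

/-- A concave function on a polytope (the convex hull of a finite set in a
finite-dimensional real normed vector space) is automatically lower semicontinuous there;
consequently, if it is moreover upper semicontinuous on the polytope, it is continuous
on the polytope. -/
theorem concaveOn_polytope_lowerSemicontinuousOn
    {E : Type*} [NormedAddCommGroup E] [NormedSpace ℝ E] [FiniteDimensional ℝ E]
    (s : Set E) (hs : s.Finite) (f : E → ℝ)
    (hf : ConcaveOn ℝ (convexHull ℝ s) f) :
    LowerSemicontinuousOn f (convexHull ℝ s) ∧
    (UpperSemicontinuousOn f (convexHull ℝ s) → ContinuousOn f (convexHull ℝ s)) :=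
  concaveOn_polytope_lowerSemicontinuousOn_general s hs f hf
end
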